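/- (Theorem 1 of the paper, made precise.) Assume δ ∈ (0,1) with δ > 2R·log d/(3n·λ_min(Σ_n)) and r > 2σ_Σ²·log d / ( δ²·( λ_min(Σ_n)/2 − R·log d/(3nδ) )² ). Then with probability at least 1 − 2δ, the matrix Σ_s is invertible and the subsample estimator β̃ = Σ_s⁻¹ b_s satisfies ‖β̃ − β̂_n‖ ≤ C·r^{−1/2}, where C = 3·λ_min(Σ_n)⁻¹·δ⁻¹·σ_b. -/

import Mathlib

/-!
On the event `‖Σ_s - Σ_n‖_F ≤ λ_min(Σ_n)/2` the quadratic form of `Σ_s` is at least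
`λ_min(Σ_n)/2 · ‖v‖²`, so `Σ_s` is invertible and `‖β̃ - β̂_n‖ ≤ 2 λ_min(Σ_n)⁻¹ ‖b_s - Σ_s β̂_n‖`.

Both `Σ_s - Σ_n` and `b_s - Σ_s β̂_n` are sums `∑ i, (γ_i/p_i - 1) v_i` of independent centred
terms (for the second one because the normal equations give `∑ i, e_i x_i = 0`), so their expected
squared norms are at most `∑ i, ‖v_i‖²/p_i`, that is `σ_Σ²/r` and `σ_b²/r`. Markov's inequality
bounds each bad event by `δ`: the condition on `r` makes `σ_Σ²/r ≤ δ (λ_min(Σ_n)/2)²`, and the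
threshold `σ_b²/(rδ)` for the residual yields `‖β̃ - β̂_n‖ ≤ 2 λ_min(Σ_n)⁻¹ δ^(-1/2) σ_b r^(-1/2)`,
which is below the stated constant since `δ < 1`.
-/

open MeasureTheory ProbabilityTheory Matrix

/-- Largest eigenvalue of a (Hermitian) real matrix. -/
noncomputable def lamMax {d : ℕ} (M : Matrix (Fin d) (Fin d) ℝ) : ℝ :=
  if h : M.IsHermitian then ⨆ i, h.eigenvalues i else 0

/-- Smallest eigenvalue of a (Hermitian) real matrix. -/
noncomputable def lamMin {d : ℕ} (M : Matrix (Fin d) (Fin d) ℝ) : ℝ :=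
  if h : M.IsHermitian then ⨅ i, h.eigenvalues i else 0

/-- Euclidean norm of a vector in ℝ^d. -/
noncomputable def euclNorm {d : ℕ} (v : Fin d → ℝ) : ℝ := Real.sqrt (∑ i, v i ^ 2)

section QuadraticForms

variable {d : ℕ}

lemma euclNorm_nonneg (v : Fin d → ℝ) : 0 ≤ euclNorm v := Real.sqrt_nonneg _

lemma euclNorm_sq (v : Fin d → ℝ) : euclNorm v ^ 2 = ∑ k, v k ^ 2 :=
  Real.sq_sqrt (by positivity)

lemma euclNorm_sq_eq_dotProduct (v : Fin d → ℝ) : euclNorm v ^ 2 = v ⬝ᵥ v := by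
  rw [euclNorm_sq]
  simp only [dotProduct, sq]

lemma euclNorm_neg (v : Fin d → ℝ) : euclNorm (-v) = euclNorm v := by
  simp [euclNorm]

lemma dotProduct_le_euclNorm_mul (u v : Fin d → ℝ) : u ⬝ᵥ v ≤ euclNorm u * euclNorm v :=
  Real.sum_mul_le_sqrt_mul_sqrt _ u v

lemma euclNorm_mulVec_le (C : Matrix (Fin d) (Fin d) ℝ) (v : Fin d → ℝ) :
    euclNorm (C *ᵥ v) ≤ √(∑ k, ∑ l, C k l ^ 2) * euclNorm v := by
  rw [euclNorm, euclNorm, ← Real.sqrt_mul (by positivity), Finset.sum_mul]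
  exact Real.sqrt_le_sqrt <| Finset.sum_le_sum fun k _ =>
    Finset.sum_mul_sq_le_sq_mul_sq Finset.univ (C k) v

lemma neg_dotProduct_mulVec_le (C : Matrix (Fin d) (Fin d) ℝ) (v : Fin d → ℝ) :
    -(v ⬝ᵥ C *ᵥ v) ≤ √(∑ k, ∑ l, C k l ^ 2) * euclNorm v ^ 2 := by
  calc -(v ⬝ᵥ C *ᵥ v) = -v ⬝ᵥ C *ᵥ v := (neg_dotProduct v _).symm
    _ ≤ euclNorm v * euclNorm (C *ᵥ v) := by
      simpa only [euclNorm_neg] using dotProduct_le_euclNorm_mul (-v) (C *ᵥ v)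
    _ ≤ euclNorm v * (√(∑ k, ∑ l, C k l ^ 2) * euclNorm v) :=
      mul_le_mul_of_nonneg_left (euclNorm_mulVec_le C v) (euclNorm_nonneg v)
    _ = √(∑ k, ∑ l, C k l ^ 2) * euclNorm v ^ 2 := by ring

end QuadraticForms

section Coercivity

open scoped MatrixOrder

variable {d : ℕ}

lemma lamMin_le_eigenvalues {A : Matrix (Fin d) (Fin d) ℝ} (hA : A.IsHermitian) (i : Fin d) :
    lamMin A ≤ hA.eigenvalues i := by
  rw [lamMin, dif_pos hA]
  exact ciInf_le (Set.finite_range _).bddBelow i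

lemma lamMin_pos {A : Matrix (Fin d) (Fin d) ℝ} (hA : A.PosDef) (hd : 0 < d) : 0 < lamMin A := by
  have : Nonempty (Fin d) := ⟨⟨0, hd⟩⟩
  obtain ⟨i, hi⟩ := exists_eq_ciInf_of_finite (f := hA.1.eigenvalues)
  rw [lamMin, dif_pos hA.1, ← hi]
  exact hA.eigenvalues_pos i

lemma lamMin_mul_euclNorm_sq_le {A : Matrix (Fin d) (Fin d) ℝ} (hA : A.IsHermitian)
    (v : Fin d → ℝ) : lamMin A * euclNorm v ^ 2 ≤ v ⬝ᵥ A *ᵥ v := by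
  have hpsd : (A - lamMin A • 1).PosSemidef := by
    rw [← Matrix.le_iff, ← Algebra.algebraMap_eq_smul_one]
    refine algebraMap_le_of_le_spectrum fun x hx => ?_
    rw [hA.spectrum_real_eq_range_eigenvalues] at hx
    obtain ⟨i, rfl⟩ := hx
    exact lamMin_le_eigenvalues hA i
  have := hpsd.dotProduct_mulVec_nonneg v
  rw [star_trivial, sub_mulVec, dotProduct_sub, smul_mulVec, one_mulVec, dotProduct_smul,
    smul_eq_mul, ← euclNorm_sq_eq_dotProduct] at this
  linarith

variable {A B : Matrix (Fin d) (Fin d) ℝ} {c : ℝ}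

lemma coercive_of_frobenius_sub_le {m ε : ℝ}
    (hA : ∀ v, m * euclNorm v ^ 2 ≤ v ⬝ᵥ A *ᵥ v) (hBA : √(∑ k, ∑ l, (B - A) k l ^ 2) ≤ ε)
    (v : Fin d → ℝ) : (m - ε) * euclNorm v ^ 2 ≤ v ⬝ᵥ B *ᵥ v := by
  have hsplit : v ⬝ᵥ B *ᵥ v = v ⬝ᵥ A *ᵥ v + v ⬝ᵥ (B - A) *ᵥ v := by
    rw [sub_mulVec, dotProduct_sub]
    ring
  have hpert := neg_dotProduct_mulVec_le (B - A) v
  have := mul_le_mul_of_nonneg_right hBA (sq_nonneg (euclNorm v))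
  linarith [hA v]

lemma isUnit_det_of_coercive (hc : 0 < c) (hB : ∀ v, c * euclNorm v ^ 2 ≤ v ⬝ᵥ B *ᵥ v) :
    IsUnit B.det := by
  rw [isUnit_iff_ne_zero, Ne, ← exists_mulVec_eq_zero_iff]
  rintro ⟨v, hv, hBv⟩
  have := hB v
  rw [hBv, dotProduct_zero, euclNorm_sq_eq_dotProduct] at this
  exact hv (dotProduct_self_eq_zero.mp (le_antisymm (nonpos_of_mul_nonpos_right this hc)
    (dotProduct_self_star_nonneg v)))

lemma mul_euclNorm_le_of_coercive (hB : ∀ v, c * euclNorm v ^ 2 ≤ v ⬝ᵥ B *ᵥ v)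
    (u : Fin d → ℝ) : c * euclNorm u ≤ euclNorm (B *ᵥ u) := by
  rcases (euclNorm_nonneg u).eq_or_lt with hu | hu
  · rw [← hu, mul_zero]
    exact euclNorm_nonneg _
  refine le_of_mul_le_mul_right ?_ hu
  calc c * euclNorm u * euclNorm u = c * euclNorm u ^ 2 := by ring
    _ ≤ u ⬝ᵥ B *ᵥ u := hB u
    _ ≤ euclNorm u * euclNorm (B *ᵥ u) := dotProduct_le_euclNorm_mul u _
    _ = euclNorm (B *ᵥ u) * euclNorm u := mul_comm _ _

lemma euclNorm_inv_mulVec_sub_le (hc : 0 < c) (hB : ∀ v, c * euclNorm v ^ 2 ≤ v ⬝ᵥ B *ᵥ v)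
    (b β : Fin d → ℝ) : euclNorm (B⁻¹ *ᵥ b - β) ≤ c⁻¹ * euclNorm (b - B *ᵥ β) := by
  have hB_apply : B *ᵥ (B⁻¹ *ᵥ b - β) = b - B *ᵥ β := by
    rw [mulVec_sub, mulVec_mulVec, mul_nonsing_inv _ (isUnit_det_of_coercive hc hB), one_mulVec]
  rw [le_inv_mul_iff₀ hc, ← hB_apply]
  exact mul_euclNorm_le_of_coercive hB _

lemma isUnit_det_and_euclNorm_inv_mulVec_sub_le (hA : A.IsHermitian) (hm : 0 < lamMin A)
    (hBA : ∑ k, ∑ l, (B - A) k l ^ 2 ≤ (lamMin A / 2) ^ 2) (b β : Fin d → ℝ) :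
    IsUnit B.det ∧ euclNorm (B⁻¹ *ᵥ b - β) ≤ (lamMin A / 2)⁻¹ * euclNorm (b - B *ᵥ β) := by
  have hB := coercive_of_frobenius_sub_le (lamMin_mul_euclNorm_sq_le hA)
    (Real.sqrt_le_iff.mpr ⟨by positivity, hBA⟩)
  rw [sub_half] at hB
  exact ⟨isUnit_det_of_coercive (half_pos hm) hB, euclNorm_inv_mulVec_sub_le (half_pos hm) hB b β⟩

end Coercivity

section Markov

variable {Ω : Type*} [MeasurableSpace Ω] {μ : Measure Ω}

lemma measure_lt_le_ofReal_of_integral_le [IsFiniteMeasure μ] {f : Ω → ℝ} (hf0 : 0 ≤ f)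
    (hfi : Integrable f μ) {a δ : ℝ} (hδ : 0 < δ) (h : ∫ ω, f ω ∂μ ≤ δ * a) :
    μ {ω | a < f ω} ≤ ENNReal.ofReal δ := by
  have ha : 0 ≤ a := nonneg_of_mul_nonneg_right ((integral_nonneg hf0).trans h) hδ
  rcases ha.eq_or_lt with rfl | ha
  · have hf : f =ᵐ[μ] 0 := (integral_eq_zero_iff_of_nonneg hf0 hfi).mp
      (le_antisymm (by simpa using h) (integral_nonneg hf0))
    have hnull : μ {ω | 0 < f ω} = 0 :=
      measure_mono_null (fun ω (hω : 0 < f ω) => hω.ne') (ae_iff.mp hf)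
    exact hnull ▸ zero_le
  have hmarkov := mul_meas_ge_le_integral_of_nonneg (.of_forall hf0) hfi a
  calc μ {ω | a < f ω} ≤ μ {ω | a ≤ f ω} := measure_mono fun ω (hω : a < f ω) => hω.le
    _ ≤ ENNReal.ofReal δ := by
      rw [ENNReal.le_ofReal_iff_toReal_le (measure_ne_top _ _) hδ.le, ← measureReal_def]
      nlinarith

lemma ofReal_one_sub_add_le_measure_inter [IsProbabilityMeasure μ] {s t : Set Ω} {a b : ℝ}
    (ha : 0 ≤ a) (hb : 0 ≤ b) (hs : μ sᶜ ≤ ENNReal.ofReal a) (ht : μ tᶜ ≤ ENNReal.ofReal b) :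
    ENNReal.ofReal (1 - (a + b)) ≤ μ (s ∩ t) := by
  have hcover : 1 ≤ μ (s ∩ t) + ENNReal.ofReal (a + b) :=
    calc 1 = μ ((s ∩ t) ∪ (s ∩ t)ᶜ) := by rw [Set.union_compl_self, measure_univ]
      _ ≤ μ (s ∩ t) + μ (sᶜ ∪ tᶜ) := by rw [Set.compl_inter]; exact measure_union_le _ _
      _ ≤ μ (s ∩ t) + (ENNReal.ofReal a + ENNReal.ofReal b) :=
        add_le_add_right ((measure_union_le _ _).trans (add_le_add hs ht)) _
      _ = μ (s ∩ t) + ENNReal.ofReal (a + b) := by rw [ENNReal.ofReal_add ha hb]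
  rw [ENNReal.ofReal_sub _ (add_nonneg ha hb), ENNReal.ofReal_one]
  exact tsub_le_iff_right.mpr hcover

lemma ofReal_one_sub_two_mul_le_measure_le_and_le [IsProbabilityMeasure μ] {f g : Ω → ℝ}
    {a b δ : ℝ} (hδ : 0 < δ) (hf0 : 0 ≤ f) (hfi : Integrable f μ) (hf : ∫ ω, f ω ∂μ ≤ δ * a)
    (hg0 : 0 ≤ g) (hgi : Integrable g μ) (hg : ∫ ω, g ω ∂μ ≤ δ * b) :
    ENNReal.ofReal (1 - 2 * δ) ≤ μ {ω | f ω ≤ a ∧ g ω ≤ b} := by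
  rw [two_mul]
  exact ofReal_one_sub_add_le_measure_inter (s := {ω | f ω ≤ a}) (t := {ω | g ω ≤ b}) hδ.le hδ.le
    (by simpa only [Set.compl_ofPred, not_le] using
      measure_lt_le_ofReal_of_integral_le hf0 hfi hδ hf)
    (by simpa only [Set.compl_ofPred, not_le] using
      measure_lt_le_ofReal_of_integral_le hg0 hgi hδ hg)

end Markov

lemma sum_div_sub_one_mul {ι : Type*} [Fintype ι] (a b c : ι → ℝ) :
    ∑ i, (a i / b i - 1) * c i = ∑ i, c i / b i * a i - ∑ i, c i := by
  rw [← Finset.sum_sub_distrib]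
  exact Finset.sum_congr rfl fun i _ => by ring

structure IsPoissonSampling {ι Ω : Type*} [MeasurableSpace Ω] (μ : Measure Ω)
    (γ : ι → Ω → ℝ) (p : ι → ℝ) : Prop where
  measurable : ∀ i, Measurable (γ i)
  zero_or_one : ∀ i ω, γ i ω = 0 ∨ γ i ω = 1
  measure_eq_one : ∀ i, μ {ω | γ i ω = 1} = ENNReal.ofReal (p i)
  iIndepFun : iIndepFun γ μ

namespace IsPoissonSampling

variable {ι Ω : Type*} [MeasurableSpace Ω] {μ : Measure Ω} {γ : ι → Ω → ℝ} {p : ι → ℝ}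

lemma sq_eq (hγ : IsPoissonSampling μ γ p) (i : ι) (ω : Ω) : γ i ω ^ 2 = γ i ω := by
  rcases hγ.zero_or_one i ω with h | h <;> simp [h]

lemma memLp [IsFiniteMeasure μ] (hγ : IsPoissonSampling μ γ p) (i : ι) (q : ENNReal) :
    MemLp (γ i) q μ :=
  .of_bound (hγ.measurable i).aestronglyMeasurable 1 <| .of_forall fun ω => by
    rcases hγ.zero_or_one i ω with h | h <;> simp [h]

lemma integral_eq (hγ : IsPoissonSampling μ γ p) (i : ι) (hp : 0 ≤ p i) :
    ∫ ω, γ i ω ∂μ = p i := by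
  have hind : γ i = {ω | γ i ω = 1}.indicator 1 := by
    funext ω
    rcases hγ.zero_or_one i ω with h | h <;> simp [h]
  have hset : MeasurableSet {ω | γ i ω = 1} := hγ.measurable i (measurableSet_singleton 1)
  rw [hind, integral_indicator_one hset, measureReal_def, hγ.measure_eq_one i,
    ENNReal.toReal_ofReal hp]

variable [Fintype ι]

lemma memLp_sum_sub_one_mul [IsFiniteMeasure μ] (hγ : IsPoissonSampling μ γ p) (c : ι → ℝ) :
    MemLp (fun ω => ∑ i, (γ i ω / p i - 1) * c i) 2 μ := by
  simp only [sum_div_sub_one_mul]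
  exact (memLp_finsetSum _ fun i _ => (hγ.memLp i 2).const_mul _).sub (memLp_const _)

lemma integral_sq_sum_sub_one_mul_le [IsProbabilityMeasure μ] (hγ : IsPoissonSampling μ γ p)
    (hp : ∀ i, 0 < p i) (c : ι → ℝ) :
    ∫ ω, (∑ i, (γ i ω / p i - 1) * c i) ^ 2 ∂μ ≤ ∑ i, c i ^ 2 / p i := by
  let X : ι → Ω → ℝ := fun i ω => c i / p i * γ i ω
  have hXL : ∀ i, MemLp (X i) 2 μ := fun i => (hγ.memLp i 2).const_mul _
  have hmean : μ[∑ i, X i] = ∑ i, c i := by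
    simp only [Finset.sum_apply]
    rw [integral_finsetSum _ fun i _ => (hXL i).integrable one_le_two]
    refine Finset.sum_congr rfl fun i _ => ?_
    rw [integral_const_mul, hγ.integral_eq i (hp i).le, div_mul_cancel₀ _ (hp i).ne']
  have hpair : Set.Pairwise (Finset.univ : Finset ι) fun i j => X i ⟂ᵢ[μ] X j :=
    fun i _ j _ hij => (hγ.iIndepFun.indepFun hij).comp (measurable_const_mul _)
      (measurable_const_mul _)
  calc ∫ ω, (∑ i, (γ i ω / p i - 1) * c i) ^ 2 ∂μ = Var[∑ i, X i; μ] := by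
        rw [variance_eq_integral (memLp_finsetSum' _ fun i _ => hXL i).aemeasurable, hmean]
        simp only [sum_div_sub_one_mul, Finset.sum_apply, X]
    _ = ∑ i, Var[X i; μ] := IndepFun.variance_sum (fun i _ => hXL i) hpair
    _ ≤ ∑ i, μ[X i ^ 2] := Finset.sum_le_sum fun i _ =>
        variance_le_expectation_sq (hXL i).aestronglyMeasurable
    _ = ∑ i, c i ^ 2 / p i := by
      refine Finset.sum_congr rfl fun i _ => ?_
      simp only [X, Pi.pow_apply, mul_pow, hγ.sq_eq, integral_const_mul,
        hγ.integral_eq i (hp i).le]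
      field_simp [(hp i).ne']

variable {κ : Type*} [Fintype κ]

lemma integrable_sum_sq [IsFiniteMeasure μ] (hγ : IsPoissonSampling μ γ p) (v : ι → κ → ℝ) :
    Integrable (fun ω => ∑ k, (∑ i, (γ i ω / p i - 1) • v i) k ^ 2) μ := by
  simp only [Finset.sum_apply, Pi.smul_apply, smul_eq_mul]
  exact integrable_finsetSum _ fun k _ => (hγ.memLp_sum_sub_one_mul _).integrable_sq

lemma integral_sum_sq_le [IsProbabilityMeasure μ] (hγ : IsPoissonSampling μ γ p)
    (hp : ∀ i, 0 < p i) (v : ι → κ → ℝ) :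
    ∫ ω, ∑ k, (∑ i, (γ i ω / p i - 1) • v i) k ^ 2 ∂μ ≤ ∑ i, (∑ k, v i k ^ 2) / p i := by
  simp only [Finset.sum_apply, Pi.smul_apply, smul_eq_mul]
  rw [integral_finsetSum _ fun k _ => (hγ.memLp_sum_sub_one_mul _).integrable_sq]
  calc ∑ k, ∫ ω, (∑ i, (γ i ω / p i - 1) * v i k) ^ 2 ∂μ ≤ ∑ k, ∑ i, v i k ^ 2 / p i :=
        Finset.sum_le_sum fun k _ => hγ.integral_sq_sum_sub_one_mul_le hp _
    _ = ∑ i, (∑ k, v i k ^ 2) / p i := by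
      rw [Finset.sum_comm]
      simp only [Finset.sum_div]

lemma integrable_sum_sum_sq [IsFiniteMeasure μ] (hγ : IsPoissonSampling μ γ p) {κ' : Type*}
    [Fintype κ'] (A : ι → Matrix κ κ' ℝ) :
    Integrable (fun ω => ∑ k, ∑ l, (∑ i, (γ i ω / p i - 1) • A i) k l ^ 2) μ := by
  have := hγ.integrable_sum_sq fun i (kl : κ × κ') => A i kl.1 kl.2
  simpa only [Finset.sum_apply, Matrix.sum_apply, Pi.smul_apply, Matrix.smul_apply, smul_eq_mul,
    Fintype.sum_prod_type] using this

lemma integral_sum_sum_sq_le [IsProbabilityMeasure μ] (hγ : IsPoissonSampling μ γ p)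
    (hp : ∀ i, 0 < p i) {κ' : Type*} [Fintype κ'] (A : ι → Matrix κ κ' ℝ) :
    ∫ ω, ∑ k, ∑ l, (∑ i, (γ i ω / p i - 1) • A i) k l ^ 2 ∂μ ≤
      ∑ i, (∑ k, ∑ l, A i k l ^ 2) / p i := by
  have := hγ.integral_sum_sq_le hp fun i (kl : κ × κ') => A i kl.1 kl.2
  simpa only [Finset.sum_apply, Matrix.sum_apply, Pi.smul_apply, Matrix.smul_apply, smul_eq_mul,
    Fintype.sum_prod_type] using this

end IsPoissonSampling

section LeastSquares

variable {ι : Type*} [Fintype ι] {d : ℕ} (x : ι → Fin d → ℝ)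

lemma smul_sum_smul_sub_smul_sum {M : Type*} [AddCommGroup M] [Module ℝ M] (s : ℝ) (c : ι → ℝ)
    (v : ι → M) : s • ∑ i, c i • v i - s • ∑ i, v i = ∑ i, (c i - 1) • s • v i := by
  simp only [← Finset.sum_sub_distrib, Finset.smul_sum, sub_smul, one_smul, smul_comm s]

lemma weighted_residual_eq (s : ℝ) (c y : ι → ℝ) (β : Fin d → ℝ) :
    s • ∑ i, c i • y i • x i - (s • ∑ i, c i • vecMulVec (x i) (x i)) *ᵥ β =
      s • ∑ i, c i • (y i - x i ⬝ᵥ β) • x i := by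
  simp only [smul_mulVec, sum_mulVec, vecMulVec_mulVec, op_smul_eq_smul, ← smul_sub,
    ← Finset.sum_sub_distrib, sub_smul]

lemma weighted_residual_eq_sum_sub_one_smul {s : ℝ} {y : ι → ℝ} {β : Fin d → ℝ}
    (hβ : (s • ∑ i, vecMulVec (x i) (x i)) *ᵥ β = s • ∑ i, y i • x i) (c : ι → ℝ) :
    s • ∑ i, c i • y i • x i - (s • ∑ i, c i • vecMulVec (x i) (x i)) *ᵥ β =
      ∑ i, (c i - 1) • s • (y i - x i ⬝ᵥ β) • x i := by
  have hnormal := weighted_residual_eq x s (fun _ => 1) y β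
  simp only [one_smul, hβ, sub_self] at hnormal
  rw [weighted_residual_eq, ← sub_zero (s • _), hnormal, smul_sum_smul_sub_smul_sum]

lemma sum_sum_smul_vecMulVec_sq (s : ℝ) (u : Fin d → ℝ) :
    ∑ k, ∑ l, (s • vecMulVec u u) k l ^ 2 = s ^ 2 * (∑ k, u k ^ 2) ^ 2 := by
  simp only [Matrix.smul_apply, vecMulVec_apply, smul_eq_mul, sq, Finset.mul_sum, Finset.sum_mul]
  exact Finset.sum_congr rfl fun k _ => Finset.sum_congr rfl fun l _ => by ring

lemma sum_smul_smul_sq (s a : ℝ) (u : Fin d → ℝ) :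
    ∑ k, (s • a • u) k ^ 2 = s ^ 2 * (∑ k, u k ^ 2) * a ^ 2 := by
  simp only [Pi.smul_apply, smul_eq_mul, Finset.mul_sum, Finset.sum_mul]
  exact Finset.sum_congr rfl fun k _ => by ring

end LeastSquares

namespace IsPoissonSampling

variable {ι Ω : Type*} [Fintype ι] [MeasurableSpace Ω] {μ : Measure Ω} [IsProbabilityMeasure μ]
  {γ : ι → Ω → ℝ} {p : ι → ℝ} {d : ℕ} {x : ι → Fin d → ℝ} {s : ℝ}

lemma integrable_and_integral_frobenius_sq_sub_le (hγ : IsPoissonSampling μ γ p) (hp : ∀ i, 0 < p i)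
    {S : Matrix (Fin d) (Fin d) ℝ} {Ss : Ω → Matrix (Fin d) (Fin d) ℝ}
    (hS : S = s • ∑ i, vecMulVec (x i) (x i))
    (hSs : ∀ ω, Ss ω = s • ∑ i, (γ i ω / p i) • vecMulVec (x i) (x i)) :
    Integrable (fun ω => ∑ k, ∑ l, (Ss ω - S) k l ^ 2) μ ∧
      ∫ ω, ∑ k, ∑ l, (Ss ω - S) k l ^ 2 ∂μ ≤ s ^ 2 * ∑ i, (∑ k, x i k ^ 2) ^ 2 / p i := by
  simp only [hS, hSs, smul_sum_smul_sub_smul_sum]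
  refine ⟨hγ.integrable_sum_sum_sq _, (hγ.integral_sum_sum_sq_le hp _).trans_eq ?_⟩
  simp only [sum_sum_smul_vecMulVec_sq, mul_div_assoc, Finset.mul_sum]

lemma integrable_and_integral_residual_sq_le (hγ : IsPoissonSampling μ γ p) (hp : ∀ i, 0 < p i)
    {y e : ι → ℝ} {β : Fin d → ℝ} {Ss : Ω → Matrix (Fin d) (Fin d) ℝ} {bs : Ω → Fin d → ℝ}
    (he : ∀ i, e i = y i - x i ⬝ᵥ β)
    (hβ : (s • ∑ i, vecMulVec (x i) (x i)) *ᵥ β = s • ∑ i, y i • x i)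
    (hSs : ∀ ω, Ss ω = s • ∑ i, (γ i ω / p i) • vecMulVec (x i) (x i))
    (hbs : ∀ ω, bs ω = s • ∑ i, (γ i ω / p i) • y i • x i) :
    Integrable (fun ω => ∑ k, (bs ω - Ss ω *ᵥ β) k ^ 2) μ ∧
      ∫ ω, ∑ k, (bs ω - Ss ω *ᵥ β) k ^ 2 ∂μ ≤
        s ^ 2 * ∑ i, (∑ k, x i k ^ 2) * e i ^ 2 / p i := by
  simp only [hSs, hbs, weighted_residual_eq_sum_sub_one_smul x hβ, ← he]
  refine ⟨hγ.integrable_sum_sq _, (hγ.integral_sum_sq_le hp _).trans_eq ?_⟩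
  rw [Finset.mul_sum]
  exact Finset.sum_congr rfl fun i _ => by rw [sum_smul_smul_sq]; ring

end IsPoissonSampling

lemma div_le_mul_half_sq {s r m δ R L N : ℝ} (hr : 0 < r) (hm : 0 < m) (hδ0 : 0 < δ)
    (hδ1 : δ < 1) (hN : 0 < N) (hR : 0 ≤ R) (hL : 1 / 2 < L) (hδ : δ > 2 * R * L / (3 * N * m))
    (hrbig : r > 2 * s * L / (δ ^ 2 * (m / 2 - R * L / (3 * N * δ)) ^ 2)) :
    s / r ≤ δ * (m / 2) ^ 2 := by
  rcases lt_or_ge s 0 with hs | hs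
  · exact (div_neg_of_neg_of_pos hs hr).le.trans (by positivity)
  set t := m / 2 - R * L / (3 * N * δ)
  have ht : 0 < t := by
    have := (div_lt_iff₀ (by positivity)).mp hδ
    rw [sub_pos, div_lt_iff₀ (by positivity)]
    linarith
  have htm : t ≤ m / 2 := sub_le_self _ (by positivity)
  have hδsq : δ ^ 2 ≤ δ := by nlinarith
  rw [div_le_iff₀ hr]
  calc s ≤ 2 * s * L := by nlinarith
    _ ≤ r * (δ ^ 2 * t ^ 2) := ((div_lt_iff₀ (by positivity)).mp hrbig).le
    _ ≤ r * (δ * (m / 2) ^ 2) := by gcongr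
    _ = δ * (m / 2) ^ 2 * r := by ring

lemma inv_half_mul_le {z m δ r s : ℝ} (hm : 0 < m) (hδ0 : 0 < δ) (hδ1 : δ < 1) (hr : 0 < r)
    (hzs : z ^ 2 ≤ s / r / δ) : (m / 2)⁻¹ * z ≤ 3 * m⁻¹ * δ⁻¹ * √s * (√r)⁻¹ := by
  have hz' : z ≤ √s / √r / √δ := by
    rw [← Real.sqrt_div' _ hr.le, ← Real.sqrt_div' _ hδ0.le]
    exact Real.le_sqrt_of_sq_le hzs
  have hsqrtδ : √δ ≤ 1 := Real.sqrt_le_one.mpr hδ1.le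
  calc (m / 2)⁻¹ * z ≤ (m / 2)⁻¹ * (√s / √r / √δ) := by gcongr
    _ = 2 * √δ * (m⁻¹ * δ⁻¹ * √s * (√r)⁻¹) := by
      field_simp
      rw [Real.sq_sqrt hδ0.le]
    _ ≤ 3 * (m⁻¹ * δ⁻¹ * √s * (√r)⁻¹) := by gcongr; linarith
    _ = 3 * m⁻¹ * δ⁻¹ * √s * (√r)⁻¹ := by ring

theorem stmt14_general {n d : ℕ} (hn : 1 ≤ n) (hd : 2 ≤ d)
    (x : Fin n → Fin d → ℝ) (y : Fin n → ℝ)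
    (Sn : Matrix (Fin d) (Fin d) ℝ)
    (hSn : Sn = (n : ℝ)⁻¹ • ∑ i, vecMulVec (x i) (x i))
    (hpd : Sn.PosDef)
    (bn : Fin d → ℝ) (hbn : bn = (n : ℝ)⁻¹ • ∑ i, y i • x i)
    (βhat : Fin d → ℝ) (hβ : βhat = Sn⁻¹ *ᵥ bn)
    (e : Fin n → ℝ) (he : ∀ i, e i = y i - ∑ k, x i k * βhat k)
    (w : Fin n → ℝ) (hw0 : ∀ i, 0 < w i)
    (r : ℝ) (hr : 0 < r)
    (p : Fin n → ℝ) (hp : ∀ i, p i = r * w i)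
    (sS2 : ℝ) (hsS2 : sS2 = ((n : ℝ) ^ 2)⁻¹ * ∑ i, (w i)⁻¹ * (∑ k, x i k ^ 2) ^ 2)
    (sb2 : ℝ) (hsb2 : sb2 = ((n : ℝ) ^ 2)⁻¹ * ∑ i, (w i)⁻¹ * (∑ k, x i k ^ 2) * e i ^ 2)
    (R : ℝ) (hR : R = ⨆ j, ∑ k, x j k ^ 2)
    {Ω : Type} [MeasurableSpace Ω] (μ : Measure Ω) [IsProbabilityMeasure μ]
    (γ : Fin n → Ω → ℝ) (hmeas : ∀ i, Measurable (γ i))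
    (h01 : ∀ i ω, γ i ω = 0 ∨ γ i ω = 1)
    (hBer : ∀ i, μ {ω | γ i ω = 1} = ENNReal.ofReal (p i))
    (hind : iIndepFun γ μ)
    (Ss : Ω → Matrix (Fin d) (Fin d) ℝ)
    (hSs : ∀ ω, Ss ω = (n : ℝ)⁻¹ • ∑ i, (γ i ω / p i) • vecMulVec (x i) (x i))
    (bs : Ω → Fin d → ℝ)
    (hbs : ∀ ω, bs ω = (n : ℝ)⁻¹ • ∑ i, (γ i ω / p i) • y i • x i)
    (δ : ℝ) (hδ0 : 0 < δ) (hδ1 : δ < 1)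
    (hδ : δ > 2 * R * Real.log d / (3 * n * lamMin Sn))
    (hrbig : r > 2 * sS2 * Real.log d /
        (δ ^ 2 * (lamMin Sn / 2 - R * Real.log d / (3 * n * δ)) ^ 2)) :
    ENNReal.ofReal (1 - 2 * δ) ≤
      μ {ω | IsUnit (Ss ω).det ∧
        euclNorm ((Ss ω)⁻¹ *ᵥ bs ω - βhat) ≤
          3 * (lamMin Sn)⁻¹ * δ⁻¹ * Real.sqrt sb2 * (Real.sqrt r)⁻¹} := by
  have hp0 : ∀ i, 0 < p i := fun i => hp i ▸ mul_pos hr (hw0 i)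
  have hγ : IsPoissonSampling μ γ p := ⟨hmeas, h01, hBer, hind⟩
  have hm : 0 < lamMin Sn := lamMin_pos hpd (by omega)
  have hlog : 1 / 2 < Real.log d := by
    have := Real.log_le_log two_pos (by exact_mod_cast hd : (2 : ℝ) ≤ d)
    linarith [Real.log_two_gt_d9]
  have hR0 : 0 ≤ R := hR ▸ Real.iSup_nonneg fun j => by positivity
  have hweights : ∀ f : Fin n → ℝ, ((n : ℝ)⁻¹) ^ 2 * ∑ i, f i / p i =
      ((n : ℝ) ^ 2)⁻¹ * (∑ i, (w i)⁻¹ * f i) / r := by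
    intro f
    simp only [hp, inv_pow, Finset.mul_sum, Finset.sum_div]
    exact Finset.sum_congr rfl fun i _ => by field_simp
  have hnormal :
      ((n : ℝ)⁻¹ • ∑ i, vecMulVec (x i) (x i)) *ᵥ βhat = (n : ℝ)⁻¹ • ∑ i, y i • x i := by
    rw [← hSn, ← hbn, hβ, mulVec_mulVec, mul_nonsing_inv _ hpd.det_pos.ne'.isUnit, one_mulVec]
  obtain ⟨hFint, hEF⟩ := hγ.integrable_and_integral_frobenius_sq_sub_le hp0 hSn hSs
  obtain ⟨hGint, hEG⟩ := hγ.integrable_and_integral_residual_sq_le hp0 he hnormal hSs hbs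
  refine (ofReal_one_sub_two_mul_le_measure_le_and_le hδ0 (a := (lamMin Sn / 2) ^ 2)
      (b := sb2 / r / δ) (fun ω => by positivity) hFint (hEF.trans ?_) (fun ω => by positivity)
      hGint (hEG.trans_eq ?_)).trans (measure_mono fun ω ⟨hωF, hωG⟩ => ?_)
  · rw [hweights, ← hsS2]
    exact div_le_mul_half_sq hr hm hδ0 hδ1 (Nat.cast_pos.mpr hn) hR0 hlog hδ hrbig
  · rw [hweights, hsb2]
    field_simp
  · obtain ⟨hdet, herr⟩ := isUnit_det_and_euclNorm_inv_mulVec_sub_le hpd.1 hm hωF (bs ω) βhat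
    exact ⟨hdet, herr.trans (inv_half_mul_le hm hδ0 hδ1 hr (euclNorm_sq _ ▸ hωG))⟩

/-- Theorem 1 of the paper: with probability at least
`1 − 2δ`, the subsampled matrix `Σ_s` is invertible and the subsample estimator satisfies
`‖β̃ − β̂_n‖ ≤ C·r^{−1/2}` with `C = 3·λ_min(Σ_n)⁻¹·δ⁻¹·σ_b`.
 -/
theorem stmt14 {n d : ℕ} (hn : 1 ≤ n) (hd : 2 ≤ d)
    (x : Fin n → Fin d → ℝ) (y : Fin n → ℝ)
    (Sn : Matrix (Fin d) (Fin d) ℝ)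
    (hSn : Sn = (n : ℝ)⁻¹ • ∑ i, vecMulVec (x i) (x i))
    (hpd : Sn.PosDef)
    (bn : Fin d → ℝ) (hbn : bn = (n : ℝ)⁻¹ • ∑ i, y i • x i)
    (βhat : Fin d → ℝ) (hβ : βhat = Sn⁻¹ *ᵥ bn)
    (e : Fin n → ℝ) (he : ∀ i, e i = y i - ∑ k, x i k * βhat k)
    (w : Fin n → ℝ) (hw0 : ∀ i, 0 < w i) (hw1 : ∑ i, w i = 1)
    (r : ℝ) (hr : 0 < r)
    (p : Fin n → ℝ) (hp : ∀ i, p i = r * w i) (hp1 : ∀ i, p i ≤ 1)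
    (sS2 : ℝ) (hsS2 : sS2 = ((n : ℝ) ^ 2)⁻¹ * ∑ i, (w i)⁻¹ * (∑ k, x i k ^ 2) ^ 2)
    (sb2 : ℝ) (hsb2 : sb2 = ((n : ℝ) ^ 2)⁻¹ * ∑ i, (w i)⁻¹ * (∑ k, x i k ^ 2) * e i ^ 2)
    (R : ℝ) (hR : R = ⨆ j, ∑ k, x j k ^ 2)
    {Ω : Type} [MeasurableSpace Ω] (μ : Measure Ω) [IsProbabilityMeasure μ]
    (γ : Fin n → Ω → ℝ) (hmeas : ∀ i, Measurable (γ i))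
    (h01 : ∀ i ω, γ i ω = 0 ∨ γ i ω = 1)
    (hBer : ∀ i, μ {ω | γ i ω = 1} = ENNReal.ofReal (p i))
    (hind : iIndepFun γ μ)
    (Ss : Ω → Matrix (Fin d) (Fin d) ℝ)
    (hSs : ∀ ω, Ss ω = (n : ℝ)⁻¹ • ∑ i, (γ i ω / p i) • vecMulVec (x i) (x i))
    (bs : Ω → Fin d → ℝ)
    (hbs : ∀ ω, bs ω = (n : ℝ)⁻¹ • ∑ i, (γ i ω / p i) • y i • x i)
    (δ : ℝ) (hδ0 : 0 < δ) (hδ1 : δ < 1)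
    (hδ : δ > 2 * R * Real.log d / (3 * n * lamMin Sn))
    (hrbig : r > 2 * sS2 * Real.log d /
        (δ ^ 2 * (lamMin Sn / 2 - R * Real.log d / (3 * n * δ)) ^ 2)) :
    ENNReal.ofReal (1 - 2 * δ) ≤
      μ {ω | IsUnit (Ss ω).det ∧
        euclNorm ((Ss ω)⁻¹ *ᵥ bs ω - βhat) ≤
          3 * (lamMin Sn)⁻¹ * δ⁻¹ * Real.sqrt sb2 * (Real.sqrt r)⁻¹} :=
  stmt14_general hn hd x y Sn hSn hpd bn hbn βhat hβ e he w hw0 r hr p hp sS2 hsS2 sb2 hsb2 R hR μ γ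
    hmeas h01 hBer hind Ss hSs bs hbs δ hδ0 hδ1 hδ hrbig
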